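/- Let Ω be the 5×5 skew-symmetric matrix with upper-triangular nonzero entries Ω₁₃ = (v₀+1)(v₂+1), Ω₁₄ = -(v₀+1)(v₃+1), Ω₁₅ = (v₀+1)(1/v₂+1)(v₄+1), Ω₂₄ = (v₁+1)(v₃+1), Ω₂₅ = -(v₁+1)(v₄+1), Ω₃₅ = (v₂+1)(v₄+1). Then Ω satisfies the Jacobi identity and thus defines a Poisson bracket on the open subset of ℝ⁵ where v₂ ≠ 0. -/

import Mathlib

/-! Indices start at 0, so the paper's Ω₁₅ is entry `(0, 4)`. Row 2 of Ω vanishes outside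
columns 0 and 4, so in a Jacobiator with distinct indices the derivative of the factor
`1 / v₂ + 1` of that entry only ever meets a zero coefficient, and the identity can be proved with
the factor replaced by an arbitrary function `f v₂`. The Jacobiator of a skew-symmetric matrix is
alternating, so it suffices to check the ten triples `i < j < k`, each a polynomial identity in
`v`, `f (v 2)` and `deriv f (v 2)`. -/

open Matrix

/-- The structure matrix of the Lotka-Volterra (3,-2) reduction. -/
noncomputable def lvOmega (v : Fin 5 → ℝ) : Matrix (Fin 5) (Fin 5) ℝ :=
  !![0, 0, (v 0 + 1)*(v 2 + 1), -((v 0 + 1)*(v 3 + 1)), (v 0 + 1)*(1/(v 2) + 1)*(v 4 + 1);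
     0, 0, 0, (v 1 + 1)*(v 3 + 1), -((v 1 + 1)*(v 4 + 1));
     -((v 0 + 1)*(v 2 + 1)), 0, 0, 0, (v 2 + 1)*(v 4 + 1);
     (v 0 + 1)*(v 3 + 1), -((v 1 + 1)*(v 3 + 1)), 0, 0, 0;
     -((v 0 + 1)*(1/(v 2) + 1)*(v 4 + 1)), (v 1 + 1)*(v 4 + 1), -((v 2 + 1)*(v 4 + 1)), 0, 0]

/-- Partial derivative of `f : (Fin 5 → ℝ) → ℝ` with respect to the `l`-th coordinate. -/
noncomputable def pd (l : Fin 5) (f : (Fin 5 → ℝ) → ℝ) (v : Fin 5 → ℝ) : ℝ :=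
  deriv (fun t => f (Function.update v l t)) (v l)

theorem eq_zero_of_cyclic_of_antisymm {ι G : Type*} [LinearOrder ι] [AddGroup G]
    [IsAddTorsionFree G] (f : ι → ι → ι → G) (cyclic : ∀ i j k, f i j k = f j k i)
    (antisymm : ∀ i j k, f i k j = -f i j k) (hlt : ∀ i j k, i < j → j < k → f i j k = 0)
    (i j k : ι) : f i j k = 0 := by
  have diag : ∀ i j, f i j j = 0 := fun i j => self_eq_neg.mp (antisymm i j j)
  have sorted : ∀ i j k, i ≤ j → j ≤ k → f i j k = 0 := by
    intro i j k hij hjk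
    rcases hij.lt_or_eq with hij | rfl
    · rcases hjk.lt_or_eq with hjk | rfl
      · exact hlt i j k hij hjk
      · exact diag i j
    · rw [cyclic, cyclic, diag]
  rcases le_total i j with hij | hji <;> rcases le_total j k with hjk | hkj <;>
    rcases le_total i k with hik | hki
  all_goals first
    | exact sorted i j k ‹_› ‹_›
    | rw [← neg_eq_zero, ← antisymm, sorted i k j ‹_› ‹_›]
    | rw [cyclic, ← neg_eq_zero, ← antisymm, sorted j i k ‹_› ‹_›]
    | rw [cyclic, sorted j k i ‹_› ‹_›]
    | rw [← cyclic, sorted k i j ‹_› ‹_›]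
    | rw [← neg_eq_zero, ← antisymm, cyclic, sorted k j i ‹_› ‹_›]

noncomputable def jacobiator (Ω : (Fin 5 → ℝ) → Matrix (Fin 5) (Fin 5) ℝ) (v : Fin 5 → ℝ)
    (i j k : Fin 5) : ℝ :=
  ∑ l : Fin 5,
    (Ω v l i * pd l (fun w => Ω w j k) v
      + Ω v l j * pd l (fun w => Ω w k i) v
      + Ω v l k * pd l (fun w => Ω w i j) v)

theorem pd_neg (l : Fin 5) (f : (Fin 5 → ℝ) → ℝ) (v : Fin 5 → ℝ) :
    pd l (fun w => -f w) v = -pd l f v :=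
  deriv.fun_neg

section Skew

variable {Ω : (Fin 5 → ℝ) → Matrix (Fin 5) (Fin 5) ℝ}

theorem pd_apply_swap (hΩ : ∀ w a b, Ω w b a = -Ω w a b) (l : Fin 5) (v : Fin 5 → ℝ)
    (a b : Fin 5) : pd l (fun w => Ω w b a) v = -pd l (fun w => Ω w a b) v := by
  simp only [hΩ _ a b, pd_neg]

theorem jacobiator_cyclic (v : Fin 5 → ℝ) (i j k : Fin 5) :
    jacobiator Ω v i j k = jacobiator Ω v j k i :=
  Finset.sum_congr rfl fun _ _ => by ring

theorem jacobiator_swap (hΩ : ∀ w a b, Ω w b a = -Ω w a b) (v : Fin 5 → ℝ) (i j k : Fin 5) :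
    jacobiator Ω v i k j = -jacobiator Ω v i j k := by
  simp only [jacobiator, pd_apply_swap hΩ _ _ k j, pd_apply_swap hΩ _ _ j i,
    pd_apply_swap hΩ _ _ i k, ← Finset.sum_neg_distrib]
  exact Finset.sum_congr rfl fun _ _ => by ring

theorem jacobiator_eq_zero_of_lt (hΩ : ∀ w a b, Ω w b a = -Ω w a b) (v : Fin 5 → ℝ)
    (hlt : ∀ i j k : Fin 5, i < j → j < k → jacobiator Ω v i j k = 0) (i j k : Fin 5) :
    jacobiator Ω v i j k = 0 :=
  eq_zero_of_cyclic_of_antisymm (jacobiator Ω v) (jacobiator_cyclic v) (jacobiator_swap hΩ v) hlt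
    i j k

end Skew

noncomputable def lvOmegaOf (f : ℝ → ℝ) (v : Fin 5 → ℝ) : Matrix (Fin 5) (Fin 5) ℝ :=
  !![0, 0, (v 0 + 1)*(v 2 + 1), -((v 0 + 1)*(v 3 + 1)), (v 0 + 1)*(f (v 2))*(v 4 + 1);
     0, 0, 0, (v 1 + 1)*(v 3 + 1), -((v 1 + 1)*(v 4 + 1));
     -((v 0 + 1)*(v 2 + 1)), 0, 0, 0, (v 2 + 1)*(v 4 + 1);
     (v 0 + 1)*(v 3 + 1), -((v 1 + 1)*(v 3 + 1)), 0, 0, 0;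
     -((v 0 + 1)*(f (v 2))*(v 4 + 1)), (v 1 + 1)*(v 4 + 1), -((v 2 + 1)*(v 4 + 1)), 0, 0]

theorem lvOmegaOf_apply_swap (f : ℝ → ℝ) (v : Fin 5 → ℝ) (a b : Fin 5) :
    lvOmegaOf f v b a = -lvOmegaOf f v a b := by
  fin_cases a <;> fin_cases b <;> simp [lvOmegaOf]

theorem jacobiator_lvOmegaOf_of_lt (f : ℝ → ℝ) (v : Fin 5 → ℝ) (i j k : Fin 5) (hij : i < j)
    (hjk : j < k) : jacobiator (lvOmegaOf f) v i j k = 0 := by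
  fin_cases i <;> fin_cases j <;> fin_cases k <;> try omega
  all_goals
    simp only [jacobiator, Fin.sum_univ_five, pd, lvOmegaOf, Function.update_apply, of_apply,
      cons_val', cons_val, cons_val_zero, cons_val_one, cons_val_fin_one, Fin.isValue, Fin.reduceEq,
      Fin.reduceFinMk, Fin.zero_eta, Fin.mk_one, reduceIte, deriv_const', deriv_const_mul_field',
      deriv_mul_const_field', deriv.fun_neg', deriv_add_const', deriv_id'']
    ring

theorem jacobiator_lvOmegaOf (f : ℝ → ℝ) (v : Fin 5 → ℝ) (i j k : Fin 5) :
    jacobiator (lvOmegaOf f) v i j k = 0 :=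
  jacobiator_eq_zero_of_lt (lvOmegaOf_apply_swap f) v (jacobiator_lvOmegaOf_of_lt f v) i j k

theorem lvOmega_jacobi_general (v : Fin 5 → ℝ) (i j k : Fin 5) :
    ∑ l : Fin 5,
      (lvOmega v l i * pd l (fun w => lvOmega w j k) v
        + lvOmega v l j * pd l (fun w => lvOmega w k i) v
        + lvOmega v l k * pd l (fun w => lvOmega w i j) v) = 0 :=
  jacobiator_lvOmegaOf (fun t => 1 / t + 1) v i j k

/-- The Lotka-Volterra structure matrix satisfies the Jacobi identity on the
open set where v₂ ≠ 0, hence defines a Poisson bracket there. -/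
theorem lvOmega_jacobi (v : Fin 5 → ℝ) (h : v 2 ≠ 0) (i j k : Fin 5) :
    ∑ l : Fin 5,
      (lvOmega v l i * pd l (fun w => lvOmega w j k) v
        + lvOmega v l j * pd l (fun w => lvOmega w k i) v
        + lvOmega v l k * pd l (fun w => lvOmega w i j) v) = 0 :=
  lvOmega_jacobi_general v i j k
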